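/- Let B be a compact base of K*. Define C₁ := 1 / max{‖Σ_{i=1}^m λ_i u_i‖ : λ ∈ B, ‖u_i‖ ≤ 1, u_i ∈ ℝ^{n+1}} and C₂ := 1 / min{Σ_{i=1}^m |λ_i| : λ ∈ B}. Then the radius of robust feasibility satisfies C₁·dist(0_{n+1}, E(Ā, b̄, B)) ≤ ρ(Ā, b̄) ≤ C₂·dist(0_{n+1}, E(Ā, b̄, B)). -/

import Mathlib

open Finset Pointwise

noncomputable def euclNorm {k : ℕ} (v : Fin k → ℝ) : ℝ := Real.sqrt (∑ i, v i ^ 2)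

def coneHull {k : ℕ} (X : Set (Fin k → ℝ)) : Set (Fin k → ℝ) :=
  {y | y = 0 ∨ ∃ t : ℝ, 0 ≤ t ∧ ∃ c ∈ convexHull ℝ X, y = t • c}

def dualCone {m : ℕ} (K : Set (Fin m → ℝ)) : Set (Fin m → ℝ) :=
  {a | ∀ x ∈ K, 0 ≤ ∑ i, a i * x i}

def Feas {m n : ℕ} (K : Set (Fin m → ℝ)) (Abar : Fin m → Fin n → ℝ) (bbar : Fin m → ℝ)
    (r : Fin m → ℝ) : Set (Fin n → ℝ) :=
  {x | ∀ (a : Fin m → Fin n → ℝ) (b : Fin m → ℝ),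
      (∀ i, euclNorm (Fin.snoc (a i - Abar i) (b i - bbar i)) ≤ r i) →
      (fun i => (∑ j, a i j * x j) + b i) ∈ -K}

def Adm {m n : ℕ} (K : Set (Fin m → ℝ)) (Abar : Fin m → Fin n → ℝ) (bbar : Fin m → ℝ) :
    Set (Fin m → ℝ) :=
  {r | (∀ i, 0 ≤ r i) ∧ (Feas K Abar bbar r).Nonempty}

noncomputable def rrf {m n : ℕ} (K : Set (Fin m → ℝ)) (Abar : Fin m → Fin n → ℝ)
    (bbar : Fin m → ℝ) : ℝ :=
  sSup {α : ℝ | 0 ≤ α ∧ (fun _ => α) ∈ Adm K Abar bbar}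

def Epi {m n : ℕ} (Abar : Fin m → Fin n → ℝ) (bbar : Fin m → ℝ) (B : Set (Fin m → ℝ)) :
    Set (Fin (n + 1) → ℝ) :=
  {y | ∃ l ∈ B, ∃ w : ℝ, 0 ≤ w ∧
    y = Fin.snoc (fun j => ∑ i, l i * Abar i j) (-(∑ i, l i * bbar i) + w)}

noncomputable def edist0 {m n : ℕ} (Abar : Fin m → Fin n → ℝ) (bbar : Fin m → ℝ)
    (B : Set (Fin m → ℝ)) : ℝ :=
  sInf {t : ℝ | ∃ y ∈ Epi Abar bbar B, t = euclNorm y}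

def IsCompactBase {m : ℕ} (C B : Set (Fin m → ℝ)) : Prop :=
  IsCompact B ∧ Convex ℝ B ∧ B ⊆ C ∧ (0 : Fin m → ℝ) ∉ B ∧
    C = {y | ∃ t : ℝ, 0 ≤ t ∧ ∃ b ∈ B, y = t • b}

def IsClosedConvexCone {m : ℕ} (K : Set (Fin m → ℝ)) : Prop :=
  IsClosed K ∧ Convex ℝ K ∧ ∀ t : ℝ, 0 ≤ t → ∀ x ∈ K, t • x ∈ K

noncomputable def c1 {m : ℕ} (n : ℕ) (B : Set (Fin m → ℝ)) : ℝ :=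
  (sSup {t : ℝ | ∃ l ∈ B, ∃ u : Fin m → (Fin (n + 1) → ℝ),
    (∀ i, euclNorm (u i) ≤ 1) ∧ t = euclNorm (∑ i, l i • u i)})⁻¹

noncomputable def c2 {m : ℕ} (B : Set (Fin m → ℝ)) : ℝ :=
  (sInf {t : ℝ | ∃ l ∈ B, t = ∑ i, |l i|})⁻¹

/-!
For `l ∈ B`, the worst admissible perturbation of the rows of `[Ā | b̄]` with uniform radius `α`
moves row `i` by `± α (x, 1) / ‖(x, 1)‖`, so, `-K` being cut out by the functionals in `B`,
`x` is robustly feasible iff `⟨l, Āx + b̄⟩ + α ‖l‖₁ ‖(x, 1)‖ ≤ 0` for every `l ∈ B`.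

Upper bound: a point of `E` built from `l` pairs with `(x, -1)` to at most
`⟨l, Āx + b̄⟩ ≤ -α ‖l‖₁ ‖(x, 1)‖`, so by Cauchy–Schwarz its norm is at least `α ‖l‖₁ ≥ α / C₂`.

Lower bound: `‖l‖₁ ≤ 1 / C₁` on `B`. Let `v` be the point of the closure of `E` nearest to `0`,
so that `⟨v, y⟩ ≥ ‖v‖²` on `E`. If `α / C₁ < ‖v‖`, moving the homogenized nominal solution
`(x₀, -1)` by a suitable multiple of `-v` and dehomogenizing gives a robustly feasible point.
-/

open Matrix

section Snoc

variable {k : ℕ} {α : Type*}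

theorem snoc_add_snoc [Add α] (u v : Fin k → α) (a b : α) :
    (Fin.snoc u a : Fin (k + 1) → α) + Fin.snoc v b = Fin.snoc (u + v) (a + b) := by
  ext i; refine Fin.lastCases ?_ (fun j => ?_) i <;> simp

theorem snoc_sub_snoc [Sub α] (u v : Fin k → α) (a b : α) :
    (Fin.snoc u a : Fin (k + 1) → α) - Fin.snoc v b = Fin.snoc (u - v) (a - b) := by
  ext i; refine Fin.lastCases ?_ (fun j => ?_) i <;> simp

theorem smul_snoc {M : Type*} [SMul M α] (c : M) (u : Fin k → α) (a : α) :
    c • (Fin.snoc u a : Fin (k + 1) → α) = Fin.snoc (c • u) (c • a) := by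
  ext i; refine Fin.lastCases ?_ (fun j => ?_) i <;> simp

theorem snoc_dotProduct_snoc [Mul α] [AddCommMonoid α] (u v : Fin k → α) (a b : α) :
    (Fin.snoc u a : Fin (k + 1) → α) ⬝ᵥ Fin.snoc v b = u ⬝ᵥ v + a * b := by
  simp [dotProduct, Fin.sum_univ_castSucc]

end Snoc

section EuclNorm

variable {k : ℕ}

theorem euclNorm_eq_norm (v : Fin k → ℝ) : euclNorm v = ‖WithLp.toLp 2 v‖ := by
  simp [euclNorm, EuclideanSpace.norm_eq]

theorem euclNorm_nonneg (v : Fin k → ℝ) : 0 ≤ euclNorm v := Real.sqrt_nonneg _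

theorem continuous_euclNorm : Continuous (euclNorm : (Fin k → ℝ) → ℝ) := by
  unfold euclNorm; fun_prop

theorem euclNorm_smul (c : ℝ) (v : Fin k → ℝ) : euclNorm (c • v) = |c| * euclNorm v := by
  simp only [euclNorm_eq_norm, WithLp.toLp_smul, norm_smul, Real.norm_eq_abs]

theorem euclNorm_sub_le (v w : Fin k → ℝ) : euclNorm (v - w) ≤ euclNorm v + euclNorm w := by
  simpa only [euclNorm_eq_norm, WithLp.toLp_sub] using norm_sub_le _ _

theorem euclNorm_sum_le {ι : Type*} (s : Finset ι) (v : ι → Fin k → ℝ) :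
    euclNorm (∑ i ∈ s, v i) ≤ ∑ i ∈ s, euclNorm (v i) := by
  simpa only [euclNorm_eq_norm, WithLp.toLp_sum] using norm_sum_le _ _

theorem inner_toLp_toLp_eq_dotProduct (v w : Fin k → ℝ) :
    inner ℝ (WithLp.toLp 2 v) (WithLp.toLp 2 w) = v ⬝ᵥ w := by
  rw [EuclideanSpace.inner_toLp_toLp, star_trivial, dotProduct_comm]

theorem abs_dotProduct_le_euclNorm_mul (v w : Fin k → ℝ) :
    |v ⬝ᵥ w| ≤ euclNorm v * euclNorm w := by
  rw [euclNorm_eq_norm, euclNorm_eq_norm, ← inner_toLp_toLp_eq_dotProduct]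
  exact abs_real_inner_le_norm _ _

theorem dotProduct_self_eq_euclNorm_sq (v : Fin k → ℝ) : v ⬝ᵥ v = euclNorm v ^ 2 := by
  rw [euclNorm, Real.sq_sqrt (by positivity)]
  simp [dotProduct, sq]

theorem euclNorm_snoc_neg (v : Fin k → ℝ) (a : ℝ) :
    euclNorm (Fin.snoc v (-a) : Fin (k + 1) → ℝ) = euclNorm (Fin.snoc v a : Fin (k + 1) → ℝ) := by
  simp [euclNorm, Fin.sum_univ_castSucc]

theorem euclNorm_snoc_one_pos (x : Fin k → ℝ) :
    0 < euclNorm (Fin.snoc x 1 : Fin (k + 1) → ℝ) := by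
  simp only [euclNorm, Fin.sum_univ_castSucc, Fin.snoc_castSucc, Fin.snoc_last]
  positivity

theorem exists_mem_closure_euclNorm_sq_le_dotProduct {S : Set (Fin k → ℝ)} (hS : Convex ℝ S)
    (hne : S.Nonempty) : ∃ v ∈ closure S, ∀ y ∈ S, euclNorm v ^ 2 ≤ v ⬝ᵥ y := by
  set D := closure (WithLp.ofLp ⁻¹' S : Set (EuclideanSpace ℝ (Fin k)))
  have hD : Convex ℝ D :=
    (hS.linear_preimage (WithLp.linearEquiv 2 ℝ (Fin k → ℝ)).toLinearMap).closure
  obtain ⟨v, hvD, hv⟩ := exists_norm_eq_iInf_of_complete_convex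
    (hne.preimage (WithLp.ofLp_surjective 2)).closure isClosed_closure.isComplete hD 0
  refine ⟨WithLp.ofLp v, map_mem_closure (PiLp.continuous_ofLp 2 _) hvD fun y hy => hy,
    fun y hy => ?_⟩
  have h := (norm_eq_iInf_iff_real_inner_le_zero hD hvD).1 hv (WithLp.toLp 2 y) (subset_closure hy)
  rw [zero_sub, inner_neg_left, inner_sub_right, real_inner_self_eq_norm_sq,
    ← WithLp.toLp_ofLp 2 v, inner_toLp_toLp_eq_dotProduct] at h
  rw [euclNorm_eq_norm]
  linarith

end EuclNorm

theorem nonneg_of_forall_le_add_mul {a b c : ℝ} (h : ∀ w : ℝ, 0 ≤ w → a ≤ b + c * w) :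
    0 ≤ c := by
  by_contra! hc
  have hw := h ((|a| + |b| + 1) / -c) (div_nonneg (by positivity) (neg_nonneg.2 hc.le))
  have hcw : c * ((|a| + |b| + 1) / -c) = -(|a| + |b| + 1) := by field_simp [hc.ne]
  linarith [neg_abs_le a, le_abs_self b]

section Cone

variable {m : ℕ} {K B : Set (Fin m → ℝ)}

def IsClosedConvexCone.toProperCone (hK : IsClosedConvexCone K) (hne : K.Nonempty) :
    ProperCone ℝ (Fin m → ℝ) where
  carrier := K
  zero_mem' := by
    obtain ⟨x, hx⟩ := hne
    simpa using hK.2.2 0 le_rfl x hx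
  add_mem' {x y} hx hy := by
    have h := hK.2.2 2 zero_le_two _ (hK.2.1 hx hy one_half_pos.le one_half_pos.le (add_halves 1))
    rwa [smul_add, smul_smul, smul_smul, mul_one_div_cancel two_ne_zero, one_smul, one_smul] at h
  smul_mem' c x hx := hK.2.2 c c.2 x hx
  isClosed' := hK.1

theorem IsCompactBase.nonempty (hB : IsCompactBase (dualCone K) B) : B.Nonempty := by
  have h0 : (0 : Fin m → ℝ) ∈ dualCone K := fun x _ => by simp
  rw [hB.2.2.2.2] at h0
  obtain ⟨-, -, l, hl, -⟩ := h0
  exact ⟨l, hl⟩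

theorem IsCompactBase.ne_zero (hB : IsCompactBase (dualCone K) B) {l : Fin m → ℝ} (hl : l ∈ B) :
    l ≠ 0 := by
  rintro rfl; exact hB.2.2.2.1 hl

theorem IsCompactBase.dotProduct_nonpos (hB : IsCompactBase (dualCone K) B)
    {l z : Fin m → ℝ} (hl : l ∈ B) (hz : z ∈ -K) : l ⬝ᵥ z ≤ 0 := by
  have h := hB.2.2.1 hl (-z) hz
  simp only [Pi.neg_apply, mul_neg, Finset.sum_neg_distrib, neg_nonneg] at h
  exact h

theorem IsCompactBase.mem_neg_of_forall_dotProduct_nonpos (hK : IsClosedConvexCone K)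
    (hne : K.Nonempty) (hB : IsCompactBase (dualCone K) B) {z : Fin m → ℝ}
    (hz : ∀ l ∈ B, l ⬝ᵥ z ≤ 0) : z ∈ -K := by
  by_contra hzK
  obtain ⟨f, hfK, hfz⟩ := (hK.toProperCone hne).hyperplane_separation_point (x₀ := -z) hzK
  set l : Fin m → ℝ := fun i => f fun j => if i = j then 1 else 0
  have hf : ∀ x, f x = l ⬝ᵥ x := fun x => by
    rw [← f.coe_coe, LinearMap.pi_apply_eq_sum_univ]
    simp [l, dotProduct, mul_comm]
  have hl : l ∈ dualCone K := fun x hx => by simpa [hf, dotProduct] using hfK x hx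
  rw [hB.2.2.2.2] at hl
  obtain ⟨t, ht, b, hb, hlb⟩ := hl
  rw [hf, hlb, dotProduct_neg, smul_dotProduct, smul_eq_mul] at hfz
  nlinarith [hz b hb]

end Cone

section Perturbation

variable {m k : ℕ}

theorem dotProduct_perturbation_le (l : Fin m → ℝ) {Δ : Fin m → Fin k → ℝ} {α : ℝ}
    (hΔ : ∀ i, euclNorm (Δ i) ≤ α) (p : Fin k → ℝ) :
    l ⬝ᵥ (fun i => Δ i ⬝ᵥ p) ≤ α * (∑ i, |l i|) * euclNorm p := by
  calc l ⬝ᵥ (fun i => Δ i ⬝ᵥ p) = ∑ i, l i * (Δ i ⬝ᵥ p) := rfl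
    _ ≤ ∑ i, |l i| * (α * euclNorm p) := Finset.sum_le_sum fun i _ => by
        calc l i * (Δ i ⬝ᵥ p) ≤ |l i| * |Δ i ⬝ᵥ p| := (le_abs_self _).trans (abs_mul _ _).le
          _ ≤ |l i| * (α * euclNorm p) := by
            gcongr
            exact (abs_dotProduct_le_euclNorm_mul _ _).trans
              (mul_le_mul_of_nonneg_right (hΔ i) (euclNorm_nonneg p))
    _ = α * (∑ i, |l i|) * euclNorm p := by rw [← Finset.sum_mul]; ring

theorem exists_perturbation_dotProduct_eq (l : Fin m → ℝ) (p : Fin k → ℝ) {α : ℝ}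
    (hα : 0 ≤ α) : ∃ Δ : Fin m → Fin k → ℝ, (∀ i, euclNorm (Δ i) ≤ α) ∧
      l ⬝ᵥ (fun i => Δ i ⬝ᵥ p) = α * (∑ i, |l i|) * euclNorm p := by
  set N := euclNorm p
  refine ⟨fun i => (α * SignType.sign (l i) / N) • p, fun i => ?_, ?_⟩
  · have hsign : |(SignType.sign (l i) : ℝ)| ≤ 1 := by cases SignType.sign (l i) <;> simp
    rw [euclNorm_smul, abs_div, abs_mul, abs_of_nonneg hα, abs_of_nonneg (euclNorm_nonneg p)]
    rcases (euclNorm_nonneg p).eq_or_lt with hN | hN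
    · simp [← hN, hα]
    · rw [div_mul_cancel₀ _ hN.ne']
      exact mul_le_of_le_one_right hα hsign
  · have hN : ∀ a : ℝ, a / N * N ^ 2 = a * N := fun a => by
      rcases eq_or_ne N 0 with h | h
      · simp [h]
      · field_simp
    calc l ⬝ᵥ (fun i => ((α * SignType.sign (l i) / N) • p) ⬝ᵥ p)
        = ∑ i, l i * (α * SignType.sign (l i) / N * N ^ 2) := by
          simp only [smul_dotProduct, smul_eq_mul, dotProduct_self_eq_euclNorm_sq]; rfl
      _ = ∑ i, |l i| * (α * N) := Finset.sum_congr rfl fun i _ => by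
          rw [hN, ← self_mul_sign (l i)]; ring
      _ = α * (∑ i, |l i|) * N := by rw [← Finset.sum_mul]; ring

end Perturbation

section RobustFeasibility

variable {m n : ℕ} {K B : Set (Fin m → ℝ)} {Abar : Matrix (Fin m) (Fin n) ℝ} {bbar : Fin m → ℝ}

theorem perturbed_eq_nominal_add (a : Fin m → Fin n → ℝ) (b : Fin m → ℝ) (x : Fin n → ℝ) :
    (fun i => (∑ j, a i j * x j) + b i) =
      Abar *ᵥ x + bbar + fun i => Fin.snoc (a i - Abar i) (b i - bbar i) ⬝ᵥ Fin.snoc x 1 := by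
  ext i
  rw [Pi.add_apply, Pi.add_apply, snoc_dotProduct_snoc]
  simp [mulVec, dotProduct, sub_mul]
  ring

theorem mem_Feas_iff_forall_perturbation {r : Fin m → ℝ} {x : Fin n → ℝ} :
    x ∈ Feas K Abar bbar r ↔ ∀ Δ : Fin m → Fin (n + 1) → ℝ, (∀ i, euclNorm (Δ i) ≤ r i) →
      Abar *ᵥ x + bbar + (fun i => Δ i ⬝ᵥ Fin.snoc x 1) ∈ -K := by
  refine ⟨fun hx Δ hΔ => ?_, fun h a b hab => perturbed_eq_nominal_add a b x ▸ h _ hab⟩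
  obtain ⟨a, b, rfl⟩ : ∃ (a : Fin m → Fin n → ℝ) (b : Fin m → ℝ),
      Δ = fun i => Fin.snoc (a i - Abar i) (b i - bbar i) :=
    ⟨fun i => Abar i + Fin.init (Δ i), fun i => bbar i + Δ i (Fin.last n), by
      ext1 i; simp [Fin.snoc_init_self]⟩
  exact perturbed_eq_nominal_add a b x ▸ hx a b hΔ

variable {α : ℝ} {x : Fin n → ℝ}

theorem IsCompactBase.forall_le_of_mem_Feas (hB : IsCompactBase (dualCone K) B) (hα : 0 ≤ α)
    (hx : x ∈ Feas K Abar bbar fun _ => α) :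
    ∀ l ∈ B, l ⬝ᵥ (Abar *ᵥ x + bbar) + α * (∑ i, |l i|) * euclNorm (Fin.snoc x 1) ≤ 0 := by
  intro l hl
  obtain ⟨Δ, hΔ, hlΔ⟩ := exists_perturbation_dotProduct_eq l (Fin.snoc x 1) hα
  have := hB.dotProduct_nonpos hl (mem_Feas_iff_forall_perturbation.1 hx Δ hΔ)
  rwa [dotProduct_add, hlΔ] at this

theorem IsCompactBase.mem_Feas_of_forall_le (hK : IsClosedConvexCone K) (hne : K.Nonempty)
    (hB : IsCompactBase (dualCone K) B)
    (h : ∀ l ∈ B, l ⬝ᵥ (Abar *ᵥ x + bbar) + α * (∑ i, |l i|) * euclNorm (Fin.snoc x 1) ≤ 0) :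
    x ∈ Feas K Abar bbar fun _ => α :=
  mem_Feas_iff_forall_perturbation.2 fun Δ hΔ =>
    hB.mem_neg_of_forall_dotProduct_nonpos hK hne fun l hl => by
      rw [dotProduct_add]
      linarith [h l hl, dotProduct_perturbation_le l hΔ (Fin.snoc x 1)]

end RobustFeasibility

section Epigraph

variable {m n : ℕ} {B : Set (Fin m → ℝ)} {Abar : Matrix (Fin m) (Fin n) ℝ} {bbar : Fin m → ℝ}

theorem mem_Epi {y : Fin (n + 1) → ℝ} : y ∈ Epi Abar bbar B ↔
    ∃ l ∈ B, ∃ w : ℝ, 0 ≤ w ∧ y = Fin.snoc (l ᵥ* Abar) (-(l ⬝ᵥ bbar) + w) := Iff.rfl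

theorem snoc_vecMul_dotProduct_snoc_neg_one (l : Fin m → ℝ) (w : ℝ) (x : Fin n → ℝ) :
    (Fin.snoc (l ᵥ* Abar) (-(l ⬝ᵥ bbar) + w) : Fin (n + 1) → ℝ) ⬝ᵥ Fin.snoc x (-1) =
      l ⬝ᵥ (Abar *ᵥ x + bbar) - w := by
  rw [snoc_dotProduct_snoc, dotProduct_add, dotProduct_mulVec]; ring

theorem snoc_mem_Epi {l : Fin m → ℝ} (hl : l ∈ B) :
    (Fin.snoc (l ᵥ* Abar) (-(l ⬝ᵥ bbar)) : Fin (n + 1) → ℝ) ∈ Epi Abar bbar B :=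
  mem_Epi.2 ⟨l, hl, 0, le_rfl, by rw [add_zero]⟩

theorem snoc_vecMul_neg_dotProduct_snoc_neg_one (l : Fin m → ℝ) (x : Fin n → ℝ) :
    (Fin.snoc (l ᵥ* Abar) (-(l ⬝ᵥ bbar)) : Fin (n + 1) → ℝ) ⬝ᵥ Fin.snoc x (-1) =
      l ⬝ᵥ (Abar *ᵥ x + bbar) := by
  simpa using snoc_vecMul_dotProduct_snoc_neg_one (Abar := Abar) (bbar := bbar) l 0 x

theorem convex_Epi (hB : Convex ℝ B) : Convex ℝ (Epi Abar bbar B) := by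
  intro y₁ hy₁ y₂ hy₂ p q hp hq hpq
  obtain ⟨l₁, hl₁, w₁, hw₁, rfl⟩ := mem_Epi.1 hy₁
  obtain ⟨l₂, hl₂, w₂, hw₂, rfl⟩ := mem_Epi.1 hy₂
  refine mem_Epi.2 ⟨p • l₁ + q • l₂, hB hl₁ hl₂ hp hq hpq, p * w₁ + q * w₂, by positivity, ?_⟩
  rw [smul_snoc, smul_snoc, snoc_add_snoc, add_vecMul, smul_vecMul, smul_vecMul, add_dotProduct,
    smul_dotProduct, smul_dotProduct]
  congr 1
  simp only [smul_eq_mul]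
  ring

theorem edist0_le {y : Fin (n + 1) → ℝ} (hy : y ∈ Epi Abar bbar B) :
    edist0 Abar bbar B ≤ euclNorm y :=
  csInf_le ⟨0, by rintro - ⟨y, -, rfl⟩; exact euclNorm_nonneg y⟩ ⟨y, hy, rfl⟩

theorem le_edist0 (hB : B.Nonempty) {c : ℝ} (h : ∀ y ∈ Epi Abar bbar B, c ≤ euclNorm y) :
    c ≤ edist0 Abar bbar B := by
  obtain ⟨l, hl⟩ := hB
  exact le_csInf ⟨_, _, ⟨l, hl, 0, le_rfl, rfl⟩, rfl⟩ (by rintro - ⟨y, hy, rfl⟩; exact h y hy)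

variable {K : Set (Fin m → ℝ)} {α : ℝ}

theorem IsCompactBase.mem_Feas_of_forall_homogeneous (hK : IsClosedConvexCone K)
    (hne : K.Nonempty) (hB : IsCompactBase (dualCone K) B) {p : Fin n → ℝ} {s : ℝ} (hs : 0 < s)
    (h : ∀ l ∈ B, (Fin.snoc (l ᵥ* Abar) (-(l ⬝ᵥ bbar)) : Fin (n + 1) → ℝ) ⬝ᵥ Fin.snoc p (-s) +
      α * (∑ i, |l i|) * euclNorm (Fin.snoc p (-s) : Fin (n + 1) → ℝ) ≤ 0) :
    s⁻¹ • p ∈ Feas K Abar bbar fun _ => α := by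
  refine hB.mem_Feas_of_forall_le hK hne fun l hl => ?_
  have hz : (Fin.snoc p (-s) : Fin (n + 1) → ℝ) = s • Fin.snoc (s⁻¹ • p) (-1) := by
    rw [smul_snoc, smul_smul, mul_inv_cancel₀ hs.ne', one_smul, smul_eq_mul, mul_neg_one]
  have := h l hl
  rw [hz, dotProduct_smul, snoc_vecMul_neg_dotProduct_snoc_neg_one, euclNorm_smul, euclNorm_snoc_neg, abs_of_pos hs,
    smul_eq_mul] at this
  nlinarith

end Epigraph

section Constants

variable {m : ℕ} {K B : Set (Fin m → ℝ)}

theorem sum_abs_pos {l : Fin m → ℝ} (hl : l ≠ 0) : 0 < ∑ i, |l i| := by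
  obtain ⟨i, hi⟩ := Function.ne_iff.1 hl
  exact Finset.sum_pos' (fun j _ => abs_nonneg (l j)) ⟨i, Finset.mem_univ i, abs_pos.2 hi⟩

theorem continuous_sum_abs : Continuous fun l : Fin m → ℝ => ∑ i, |l i| := by fun_prop

theorem inv_c2_le_sum_abs {l : Fin m → ℝ} (hl : l ∈ B) : (c2 B)⁻¹ ≤ ∑ i, |l i| := by
  rw [c2, inv_inv]
  exact csInf_le ⟨0, by rintro - ⟨l, -, rfl⟩; positivity⟩ ⟨l, hl, rfl⟩

theorem IsCompactBase.inv_c2_pos (hB : IsCompactBase (dualCone K) B) : 0 < (c2 B)⁻¹ := by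
  obtain ⟨l₀, hl₀, hmin⟩ := hB.1.exists_isMinOn hB.nonempty continuous_sum_abs.continuousOn
  rw [c2, inv_inv]
  exact (sum_abs_pos (hB.ne_zero hl₀)).trans_le
    (le_csInf ⟨_, l₀, hl₀, rfl⟩ (by rintro - ⟨l, hl, rfl⟩; exact hmin hl))

theorem IsCompactBase.sum_abs_le_inv_c1 (hB : IsCompactBase (dualCone K) B) (n : ℕ)
    {l : Fin m → ℝ} (hl : l ∈ B) : ∑ i, |l i| ≤ (c1 n B)⁻¹ := by
  obtain ⟨C, hC⟩ := (hB.1.image continuous_sum_abs).bddAbove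
  rw [c1, inv_inv]
  refine le_csSup ⟨C, ?_⟩ ?_
  · rintro - ⟨l, hl, u, hu, rfl⟩
    calc euclNorm (∑ i, l i • u i) ≤ ∑ i, |l i| * euclNorm (u i) := by
          simpa only [euclNorm_smul] using euclNorm_sum_le Finset.univ fun i => l i • u i
      _ ≤ ∑ i, |l i| := Finset.sum_le_sum fun i _ => mul_le_of_le_one_right (abs_nonneg _) (hu i)
      _ ≤ C := hC ⟨l, hl, rfl⟩
  · set e : Fin (n + 1) → ℝ := Fin.snoc 0 1
    have he : euclNorm e = 1 := by simp [e, euclNorm, Fin.sum_univ_castSucc]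
    refine ⟨l, hl, fun i => (SignType.sign (l i) : ℝ) • e, fun i => ?_, ?_⟩
    · rw [euclNorm_smul, he, mul_one]
      cases SignType.sign (l i) <;> simp
    · simp only [smul_smul, self_mul_sign, ← Finset.sum_smul, euclNorm_smul, he, mul_one]
      exact (abs_of_nonneg (by positivity)).symm

theorem IsCompactBase.c1_pos (hB : IsCompactBase (dualCone K) B) (n : ℕ) : 0 < c1 n B := by
  obtain ⟨l, hl⟩ := hB.nonempty
  exact inv_pos.1 ((sum_abs_pos (hB.ne_zero hl)).trans_le (hB.sum_abs_le_inv_c1 n hl))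

end Constants

section Bounds

variable {m n : ℕ} {K B : Set (Fin m → ℝ)} {Abar : Matrix (Fin m) (Fin n) ℝ} {bbar : Fin m → ℝ}
  {α : ℝ}

theorem IsCompactBase.le_c2_mul_edist0 (hB : IsCompactBase (dualCone K) B) (hα : 0 ≤ α)
    {x : Fin n → ℝ} (hx : x ∈ Feas K Abar bbar fun _ => α) :
    α ≤ c2 B * edist0 Abar bbar B := by
  have hc2 : 0 < c2 B := inv_pos.1 hB.inv_c2_pos
  suffices α * (c2 B)⁻¹ ≤ edist0 Abar bbar B by
    calc α = c2 B * (α * (c2 B)⁻¹) := by field_simp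
      _ ≤ c2 B * edist0 Abar bbar B := mul_le_mul_of_nonneg_left this hc2.le
  refine le_edist0 hB.nonempty fun y hy => ?_
  obtain ⟨l, hl, w, hw, rfl⟩ := mem_Epi.1 hy
  have hN := euclNorm_snoc_one_pos x
  have hfeas := hB.forall_le_of_mem_Feas hα hx l hl
  have hcs := neg_le_of_abs_le (abs_dotProduct_le_euclNorm_mul
    (Fin.snoc (l ᵥ* Abar) (-(l ⬝ᵥ bbar) + w)) (Fin.snoc x (-1)))
  rw [snoc_vecMul_dotProduct_snoc_neg_one, euclNorm_snoc_neg] at hcs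
  have hl' : α * (∑ i, |l i|) ≤ euclNorm (Fin.snoc (l ᵥ* Abar) (-(l ⬝ᵥ bbar) + w)) :=
    le_of_mul_le_mul_right (by linarith) hN
  exact (mul_le_mul_of_nonneg_left (inv_c2_le_sum_abs hl) hα).trans hl'

theorem IsCompactBase.exists_snoc_euclNorm_sq_le_dotProduct (hB : IsCompactBase (dualCone K) B) :
    ∃ (u : Fin n → ℝ) (σ : ℝ), 0 ≤ σ ∧
      edist0 Abar bbar B ≤ euclNorm (Fin.snoc u σ : Fin (n + 1) → ℝ) ∧
      ∀ y ∈ Epi Abar bbar B, euclNorm (Fin.snoc u σ : Fin (n + 1) → ℝ) ^ 2 ≤ Fin.snoc u σ ⬝ᵥ y := by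
  obtain ⟨l₀, hl₀⟩ := hB.nonempty
  obtain ⟨v, hv_cl, hv⟩ :=
    exists_mem_closure_euclNorm_sq_le_dotProduct (convex_Epi hB.2.1) ⟨_, snoc_mem_Epi hl₀⟩
  obtain ⟨u, σ, rfl⟩ : ∃ u σ, v = Fin.snoc u σ := ⟨_, _, (Fin.snoc_init_self v).symm⟩
  refine ⟨u, σ, ?_, closure_minimal (fun y hy => edist0_le hy)
    (isClosed_le continuous_const continuous_euclNorm) hv_cl, hv⟩
  -- `Epi` is closed under raising the last coordinate.
  refine nonneg_of_forall_le_add_mul (a := euclNorm (Fin.snoc u σ : Fin (n + 1) → ℝ) ^ 2)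
    (b := u ⬝ᵥ l₀ ᵥ* Abar - σ * (l₀ ⬝ᵥ bbar)) fun w hw => ?_
  have := hv _ (mem_Epi.2 ⟨l₀, hl₀, w, hw, rfl⟩)
  rw [snoc_dotProduct_snoc] at this
  linarith

theorem IsCompactBase.feas_nonempty_of_mul_lt_euclNorm (hK : IsClosedConvexCone K)
    (hB : IsCompactBase (dualCone K) B) {x₀ : Fin n → ℝ} (hx₀ : Abar *ᵥ x₀ + bbar ∈ -K)
    (hα : 0 ≤ α) {M : ℝ} (hM : ∀ l ∈ B, ∑ i, |l i| ≤ M) {u : Fin n → ℝ} {σ : ℝ} (hσ : 0 ≤ σ)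
    (hv : ∀ l ∈ B, euclNorm (Fin.snoc u σ : Fin (n + 1) → ℝ) ^ 2 ≤
      Fin.snoc u σ ⬝ᵥ Fin.snoc (l ᵥ* Abar) (-(l ⬝ᵥ bbar)))
    (hlt : α * M < euclNorm (Fin.snoc u σ : Fin (n + 1) → ℝ)) :
    (Feas K Abar bbar fun _ => α).Nonempty := by
  set V := euclNorm (Fin.snoc u σ : Fin (n + 1) → ℝ)
  set N₀ := euclNorm (Fin.snoc x₀ (-1) : Fin (n + 1) → ℝ)
  have hαM : 0 ≤ α * M := by
    obtain ⟨l₀, hl₀⟩ := hB.nonempty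
    exact mul_nonneg hα ((Finset.sum_nonneg fun i _ => abs_nonneg (l₀ i)).trans (hM l₀ hl₀))
  -- `t` is chosen so that the gain `t V²` in `(x₀, -1) - t • v` pays for the growth of its norm.
  set t := α * M * N₀ / (V * (V - α * M))
  have ht : 0 ≤ t :=
    div_nonneg (mul_nonneg hαM (euclNorm_nonneg _)) (mul_nonneg (by linarith) (by linarith))
  have htV : t * V ^ 2 = α * M * (N₀ + t * V) := by
    have ht' : t * (V * (V - α * M)) = α * M * N₀ := div_mul_cancel₀ _ (by nlinarith)
    linear_combination ht'
  have hz : (Fin.snoc (x₀ - t • u) (-(1 + t * σ)) : Fin (n + 1) → ℝ) =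
      Fin.snoc x₀ (-1) - t • Fin.snoc u σ := by
    rw [smul_snoc, snoc_sub_snoc]
    congr 1
    ring
  refine ⟨_, hB.mem_Feas_of_forall_homogeneous (p := x₀ - t • u) (s := 1 + t * σ) hK ⟨_, hx₀⟩
    (by nlinarith) fun l hl => ?_⟩
  have hval : (Fin.snoc (l ᵥ* Abar) (-(l ⬝ᵥ bbar)) : Fin (n + 1) → ℝ) ⬝ᵥ Fin.snoc x₀ (-1) ≤ 0 :=
    snoc_vecMul_neg_dotProduct_snoc_neg_one l x₀ ▸ hB.dotProduct_nonpos hl hx₀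
  have hnorm : euclNorm (Fin.snoc x₀ (-1) - t • Fin.snoc u σ) ≤ N₀ + t * V :=
    calc _ ≤ N₀ + euclNorm (t • Fin.snoc u σ) := euclNorm_sub_le _ _
      _ = N₀ + t * V := by rw [euclNorm_smul, abs_of_nonneg ht]
  have hproj := hv l hl
  rw [hz, dotProduct_sub, dotProduct_smul, smul_eq_mul, dotProduct_comm _ (Fin.snoc u σ)]
  calc _ ≤ -(t * V ^ 2) + α * M * (N₀ + t * V) := by
        gcongr ?_ + ?_
        · linarith [mul_le_mul_of_nonneg_left hproj ht]
        · exact mul_le_mul (mul_le_mul_of_nonneg_left (hM l hl) hα) hnorm (euclNorm_nonneg _) hαM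
    _ = 0 := by rw [htV]; ring

theorem IsCompactBase.feas_nonempty_of_lt_c1_mul_edist0 (hK : IsClosedConvexCone K)
    (hB : IsCompactBase (dualCone K) B) {x₀ : Fin n → ℝ} (hx₀ : Abar *ᵥ x₀ + bbar ∈ -K)
    (hα : 0 ≤ α) (hlt : α < c1 n B * edist0 Abar bbar B) :
    (Feas K Abar bbar fun _ => α).Nonempty := by
  obtain ⟨u, σ, hσ, hd, hv⟩ := hB.exists_snoc_euclNorm_sq_le_dotProduct (Abar := Abar) (bbar := bbar)
  refine hB.feas_nonempty_of_mul_lt_euclNorm hK hx₀ hα (fun l hl => hB.sum_abs_le_inv_c1 n hl) hσ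
    (fun l hl => hv _ (snoc_mem_Epi hl)) (lt_of_lt_of_le ?_ hd)
  rwa [← div_eq_mul_inv, div_lt_iff₀ (hB.c1_pos n), mul_comm]

end Bounds

theorem statement12_general {m n : ℕ} (K : Set (Fin m → ℝ)) (hclosed : IsClosed K) (hconv : Convex ℝ K)
    (hcone : ∀ t : ℝ, 0 ≤ t → ∀ x ∈ K, t • x ∈ K)
    (B : Set (Fin m → ℝ)) (hB : IsCompactBase (dualCone K) B)
    (Abar : Fin m → Fin n → ℝ) (bbar : Fin m → ℝ)
    (hfeas : ∃ x : Fin n → ℝ, (fun i => (∑ j, Abar i j * x j) + bbar i) ∈ -K) :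
    c1 n B * edist0 Abar bbar B ≤ rrf K Abar bbar ∧
      rrf K Abar bbar ≤ c2 B * edist0 Abar bbar B := by
  have hK : IsClosedConvexCone K := ⟨hclosed, hconv, hcone⟩
  obtain ⟨x₀, hx₀⟩ : ∃ x₀, (Abar : Matrix (Fin m) (Fin n) ℝ) *ᵥ x₀ + bbar ∈ -K := hfeas
  set S := {α : ℝ | 0 ≤ α ∧ (fun _ => α) ∈ Adm K Abar bbar}
  have h0 : (0 : ℝ) ∈ S :=
    ⟨le_rfl, fun _ => le_rfl, x₀, hB.mem_Feas_of_forall_le hK ⟨_, hx₀⟩ fun l hl => by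
      simpa using hB.dotProduct_nonpos hl hx₀⟩
  have hupper : ∀ α ∈ S, α ≤ c2 B * edist0 Abar bbar B :=
    fun α ⟨hα, _, _, hx⟩ => hB.le_c2_mul_edist0 hα hx
  have hbdd : BddAbove S := ⟨_, hupper⟩
  refine ⟨le_of_forall_lt_imp_le_of_dense fun α hlt => ?_, csSup_le ⟨0, h0⟩ hupper⟩
  rcases lt_or_ge α 0 with hneg | hα
  · exact hneg.le.trans (le_csSup hbdd h0)
  · exact le_csSup hbdd
      ⟨hα, fun _ => hα, hB.feas_nonempty_of_lt_c1_mul_edist0 hK hx₀ hα hlt⟩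

/-- lower and upper bounds for the radius of robust feasibility in terms of
the distance from the origin to the epigraphical set. -/
theorem statement12 {m n : ℕ} (K : Set (Fin m → ℝ)) (hclosed : IsClosed K) (hconv : Convex ℝ K)
    (hcone : ∀ t : ℝ, 0 ≤ t → ∀ x ∈ K, t • x ∈ K)
    (hpointed : K ∩ (-K) = {0}) (hint : (interior K).Nonempty)
    (hne0 : K ≠ {0}) (hneuniv : K ≠ Set.univ)
    (B : Set (Fin m → ℝ)) (hB : IsCompactBase (dualCone K) B)
    (Abar : Fin m → Fin n → ℝ) (bbar : Fin m → ℝ)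
    (hfeas : ∃ x : Fin n → ℝ, (fun i => (∑ j, Abar i j * x j) + bbar i) ∈ -K) :
    c1 n B * edist0 Abar bbar B ≤ rrf K Abar bbar ∧
      rrf K Abar bbar ≤ c2 B * edist0 Abar bbar B :=
  statement12_general K hclosed hconv hcone B hB Abar bbar hfeas
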